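/- If G is a connected graph on n vertices with minimum degree δ(G) ≥ ⌊n/2⌋ + 1, then md(G) = 1. -/

import Mathlib

/-- An MD-coloring: an edge-coloring such that every pair of distinct vertices is
separated by a monochromatic edge-cut (equivalently, by some color class). -/
def isMDColoring {V : Type*} (G : SimpleGraph V) (c : Sym2 V → ℕ) : Prop :=
  ∀ u v : V, u ≠ v → ∃ i : ℕ, ¬ (G.deleteEdges {e | c e = i}).Reachable u v

/-- The monochromatic disconnection number: the maximum number of colors used on
edges over all MD-colorings. -/
noncomputable def mdNum {V : Type*} (G : SimpleGraph V) : ℕ :=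
  sSup {n | ∃ c : Sym2 V → ℕ, isMDColoring G c ∧ (c '' G.edgeSet).ncard = n}

/-!
Fix a colour `i` of an MD-coloring, and let `H₁` and `H₂` be the spanning subgraphs formed by the
edges of colour `i` and of the other colours. Separating `u ≠ v` by colour `i` disconnects them in
`H₂`, by any other colour in `H₁`; so no two distinct vertices lie in a common component of both.
The neighbours of `u` lie in its `H₁`- or `H₂`-component, hence these components have together at
least `⌊n/2⌋ + 3` vertices. The `H₂`-components of the `s` vertices of a nontrivial `H₁`-component
are pairwise disjoint, so `s (⌊n/2⌋ + 3 - s) ≤ n`, which forces `s ≥ ⌊n/2⌋ + 2`; symmetrically for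
`H₂`. Two such components meet in at most one vertex, so they cannot both exist: `H₁` or `H₂` has
no edge, and every MD-coloring is constant on the edges.
-/

namespace SimpleGraph

variable {V : Type*}

def ReachOrthogonal (H₁ H₂ : SimpleGraph V) : Prop :=
  ∀ u v, H₁.Reachable u v → H₂.Reachable u v → u = v

lemma ReachOrthogonal.symm {H₁ H₂ : SimpleGraph V} (h : ReachOrthogonal H₁ H₂) :
    ReachOrthogonal H₂ H₁ :=
  fun u v h₂ h₁ => h u v h₁ h₂

lemma le_deleteEdges_sup_deleteEdges_compl (G : SimpleGraph V) (s : Set (Sym2 V)) :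
    G ≤ G.deleteEdges sᶜ ⊔ G.deleteEdges s := by
  intro u v huv
  by_cases he : s(u, v) ∈ s <;> simp [deleteEdges_adj, huv, he]

section Finite

variable [Fintype V]

open Classical in
noncomputable def reachFinset (H : SimpleGraph V) (u : V) : Finset V :=
  {v | H.Reachable u v}

@[simp]
lemma mem_reachFinset {H : SimpleGraph V} {u v : V} : v ∈ H.reachFinset u ↔ H.Reachable u v := by
  simp [reachFinset]

lemma reachFinset_eq_of_reachable {H : SimpleGraph V} {u v : V} (h : H.Reachable u v) :
    H.reachFinset v = H.reachFinset u := by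
  ext w
  simp only [mem_reachFinset]
  exact ⟨h.trans, h.symm.trans⟩

variable [DecidableEq V] {H₁ H₂ : SimpleGraph V}

lemma degree_add_two_le_card_reachFinset_add (G : SimpleGraph V) [DecidableRel G.Adj]
    (hG : G ≤ H₁ ⊔ H₂) (u : V) :
    G.degree u + 2 ≤ (H₁.reachFinset u).card + (H₂.reachFinset u).card := by
  have hsub : insert u (G.neighborFinset u) ⊆ H₁.reachFinset u ∪ H₂.reachFinset u := by
    intro w hw
    rcases Finset.mem_insert.1 hw with rfl | hw
    · simp
    · rcases hG ((G.mem_neighborFinset u w).1 hw) with h | h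
      · exact Finset.mem_union_left _ (mem_reachFinset.2 h.reachable)
      · exact Finset.mem_union_right _ (mem_reachFinset.2 h.reachable)
  have hinter : u ∈ H₁.reachFinset u ∩ H₂.reachFinset u := by simp
  have hunion := Finset.card_le_card hsub
  rw [Finset.card_insert_of_notMem (by simp), card_neighborFinset_eq_degree] at hunion
  have := Finset.card_union_add_card_inter (H₁.reachFinset u) (H₂.reachFinset u)
  have := Finset.card_pos.2 ⟨u, hinter⟩
  omega

namespace ReachOrthogonal

variable (h : ReachOrthogonal H₁ H₂)
include h

lemma card_inter_le_one (x y : V) : (H₁.reachFinset x ∩ H₂.reachFinset y).card ≤ 1 := by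
  refine Finset.card_le_one.2 fun a ha b hb => ?_
  simp only [Finset.mem_inter, mem_reachFinset] at ha hb
  exact h a b (ha.1.symm.trans hb.1) (ha.2.symm.trans hb.2)

lemma sum_card_reachFinset_le (u : V) :
    ∑ v ∈ H₁.reachFinset u, (H₂.reachFinset v).card ≤ Fintype.card V := by
  have hdisj : (H₁.reachFinset u : Set V).PairwiseDisjoint H₂.reachFinset := by
    intro v hv w hw hvw
    refine Finset.disjoint_left.2 fun a hva hwa => hvw (h v w ?_ ?_)
    · exact (mem_reachFinset.1 hv).symm.trans (mem_reachFinset.1 hw)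
    · exact (mem_reachFinset.1 hva).trans (mem_reachFinset.1 hwa).symm
  rw [← Finset.card_biUnion hdisj]
  exact Finset.card_le_univ _

lemma card_reachFinset_ge
    (hsum : ∀ u, Fintype.card V / 2 + 3 ≤ (H₁.reachFinset u).card + (H₂.reachFinset u).card)
    {u : V} (hu : 1 < (H₁.reachFinset u).card) :
    Fintype.card V / 2 + 2 ≤ (H₁.reachFinset u).card := by
  set n := Fintype.card V
  set s := (H₁.reachFinset u).card
  have hbound : s * (n / 2 + 3) ≤ s * s + n :=
    calc s * (n / 2 + 3)
        ≤ ∑ v ∈ H₁.reachFinset u, ((H₁.reachFinset v).card + (H₂.reachFinset v).card) := by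
          simpa using Finset.card_nsmul_le_sum _ _ _ fun v _ => hsum v
      _ = s * s + ∑ v ∈ H₁.reachFinset u, (H₂.reachFinset v).card := by
          rw [Finset.sum_add_distrib, Finset.sum_congr rfl fun v hv =>
            by rw [reachFinset_eq_of_reachable (mem_reachFinset.1 hv)], Finset.sum_const,
            smul_eq_mul]
      _ ≤ s * s + n := Nat.add_le_add_left (h.sum_card_reachFinset_le u) _
  by_contra! hsmall
  -- `s (n/2 + 3 - s)` is concave in `s`, so on `2 ≤ s ≤ n/2 + 1` it is at least `2 (n/2 + 1) > n`.
  have hconcave : 0 ≤ ((s : ℤ) - 2) * (n / 2 + 1 - s) := by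
    apply mul_nonneg <;> omega
  have : n ≤ 2 * (n / 2) + 1 := by omega
  zify at hbound this
  nlinarith

lemma false_of_adj_of_adj
    (hsum : ∀ u, Fintype.card V / 2 + 3 ≤ (H₁.reachFinset u).card + (H₂.reachFinset u).card)
    {x₁ y₁ x₂ y₂ : V} (h₁ : H₁.Adj x₁ y₁) (h₂ : H₂.Adj x₂ y₂) : False := by
  have big₁ := h.card_reachFinset_ge hsum <| Finset.one_lt_card.2
    ⟨x₁, mem_reachFinset.2 .rfl, y₁, mem_reachFinset.2 h₁.reachable, h₁.ne⟩
  have big₂ := h.symm.card_reachFinset_ge (fun u => (add_comm _ _).trans_ge (hsum u)) <|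
    Finset.one_lt_card.2 ⟨x₂, mem_reachFinset.2 .rfl, y₂, mem_reachFinset.2 h₂.reachable, h₂.ne⟩
  have := h.card_inter_le_one x₁ x₂
  have := Finset.card_union_add_card_inter (H₁.reachFinset x₁) (H₂.reachFinset x₂)
  have := Finset.card_le_univ (H₁.reachFinset x₁ ∪ H₂.reachFinset x₂)
  omega

end ReachOrthogonal

end Finite

end SimpleGraph

open SimpleGraph

section MDColoring

variable {V : Type*} {G : SimpleGraph V}

lemma isMDColoring_const (G : SimpleGraph V) (i : ℕ) : isMDColoring G fun _ => i := by
  intro u v huv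
  refine ⟨i, ?_⟩
  simpa [Set.ofPred_true, deleteEdges_univ] using huv

lemma isMDColoring.reachOrthogonal {c : Sym2 V → ℕ} (hc : isMDColoring G c) (i : ℕ) :
    ReachOrthogonal (G.deleteEdges {e | c e = i}ᶜ) (G.deleteEdges {e | c e = i}) := by
  intro u v h₁ h₂
  by_contra huv
  obtain ⟨j, hj⟩ := hc u v huv
  obtain rfl | hji := eq_or_ne j i
  · exact hj h₂
  · refine hj (h₁.mono (deleteEdges_anti fun e he => ?_))
    simp_all

lemma isMDColoring.eq_of_adj [Fintype V] [DecidableRel G.Adj] {c : Sym2 V → ℕ}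
    (hc : isMDColoring G c) (hδ : Fintype.card V / 2 + 1 ≤ G.minDegree) {x y x' y' : V}
    (he : G.Adj x y) (he' : G.Adj x' y') : c s(x, y) = c s(x', y') := by
  classical
  by_contra hne
  have h₁ : (G.deleteEdges {e | c e = c s(x, y)}ᶜ).Adj x y := by
    simpa [deleteEdges_adj] using he
  have h₂ : (G.deleteEdges {e | c e = c s(x, y)}).Adj x' y' := by
    simpa [deleteEdges_adj, eq_comm] using ⟨he', hne⟩
  refine (hc.reachOrthogonal _).false_of_adj_of_adj (fun u => ?_) h₁ h₂
  have := degree_add_two_le_card_reachFinset_add G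
    (G.le_deleteEdges_sup_deleteEdges_compl {e | c e = c s(x, y)}) u
  have := hδ.trans (G.minDegree_le_degree u)
  omega

lemma isMDColoring.image_edgeSet_subsingleton [Fintype V] [DecidableRel G.Adj]
    {c : Sym2 V → ℕ} (hc : isMDColoring G c)
    (hδ : Fintype.card V / 2 + 1 ≤ G.minDegree) : (c '' G.edgeSet).Subsingleton := by
  rintro _ ⟨e, he, rfl⟩ _ ⟨e', he', rfl⟩
  induction e, e' using Sym2.inductionOn₂ with
  | _ x y x' y' => exact hc.eq_of_adj hδ he he'

lemma mdNum_eq_one (hE : G.edgeSet.Nonempty)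
    (h : ∀ c, isMDColoring G c → (c '' G.edgeSet).Subsingleton) : mdNum G = 1 := by
  suffices {n | ∃ c : Sym2 V → ℕ, isMDColoring G c ∧ (c '' G.edgeSet).ncard = n} = {1} by
    rw [mdNum, this, csSup_singleton]
  ext n
  refine ⟨?_, ?_⟩
  · rintro ⟨c, hc, rfl⟩
    obtain ⟨e, he⟩ := hE
    rw [(h c hc).eq_singleton_of_mem ⟨e, he, rfl⟩, Set.ncard_singleton]
    rfl
  · rintro rfl
    exact ⟨_, isMDColoring_const G 0, by rw [hE.image_const, Set.ncard_singleton]⟩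

end MDColoring

theorem minDegree_md_general {V : Type*} [Fintype V] [Nonempty V] (G : SimpleGraph V)
    [DecidableRel G.Adj]
    (hδ : Fintype.card V / 2 + 1 ≤ G.minDegree) : mdNum G = 1 := by
  obtain ⟨v⟩ := ‹Nonempty V›
  obtain ⟨w, hvw⟩ := G.degree_pos_iff_exists_adj v |>.1 <| by
    have := G.minDegree_le_degree v
    omega
  exact mdNum_eq_one ⟨s(v, w), hvw⟩ fun c hc => hc.image_edgeSet_subsingleton hδ

theorem minDegree_md {V : Type*} [Fintype V] [Nonempty V] (G : SimpleGraph V)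
    [DecidableRel G.Adj] (hG : G.Connected)
    (hδ : Fintype.card V / 2 + 1 ≤ G.minDegree) : mdNum G = 1 :=
  minDegree_md_general G hδ
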